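/- Closure under Turing jump from decidable bar induction, abstract form: assume the contrapositive bar induction principle BI⁻ (for every ρ : List ℕ → ℕ and predicate A : List ℕ → Prop satisfying the two closure clauses with ¬A [], there is an infinite branch avoiding the ρ-bar). Then for every α : ℕ → ℕ and every T : ℕ → ℕ → Prop with each T n decidable, there exists β : ℕ → ℕ with β (2*n) = α n and (β (2*n+1) > 0 ↔ ∃ y, T n y) for all n. -/

import Mathlib

/-!
Call `β (2n)` refuted when it differs from `α n`, and `β (2n+1)` refuted by `y` when it is `0`
although `T n y`, or `y + 1` although `¬ T n y`. Barring a finite sequence as soon as one of its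
entries is refuted by a witness below its length gives a bar that is decidable in `T`. Sequences
without refuted entries are never barred and always extend, so `BI⁻` applied to their complement
yields a branch avoiding the bar; any refutation of an entry of that branch would be seen by a long
enough initial segment, so the branch is the jump.
-/

/-- The initial segment `[γ 0, ..., γ (n-1)]` of `γ` of length `n`. -/
def seg (γ : ℕ → ℕ) (n : ℕ) : List ℕ := (List.range n).map γ

@[simp]
lemma seg_length (γ : ℕ → ℕ) (n : ℕ) : (seg γ n).length = n := by
  simp [seg]

lemma seg_getD (γ : ℕ → ℕ) {n i : ℕ} (h : i < n) : (seg γ n).getD i 0 = γ i := by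
  rw [List.getD_eq_getElem _ _ (by simpa [seg] using h)]
  simp [seg]

def BarInductionNeg : Prop :=
  ∀ (ρ : List ℕ → ℕ) (A : List ℕ → Prop),
    (∀ s, ρ s = 0 → A s) → (∀ s, (∀ n : ℕ, A (s ++ [n])) → A s) → ¬ A [] →
    ∃ γ : ℕ → ℕ, ∀ n, ρ (seg γ n) ≠ 0

section Choice

-- `Q i v k`: the witness `k` refutes the value `v` at position `i`.
variable (Q : ℕ → ℕ → ℕ → Prop)

def IsUnrefuted (s : List ℕ) : Prop :=
  ∀ i < s.length, ∀ k, ¬ Q i (s.getD i 0) k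

def refutationBar [∀ i v k, Decidable (Q i v k)] (s : List ℕ) : ℕ :=
  if ∃ i < s.length, ∃ k < s.length, Q i (s.getD i 0) k then 0 else 1

variable {Q}

lemma IsUnrefuted.append {s : List ℕ} (hs : IsUnrefuted Q s) {v : ℕ}
    (hv : ∀ k, ¬ Q s.length v k) : IsUnrefuted Q (s ++ [v]) := by
  intro i hi k
  rcases Nat.lt_succ_iff_lt_or_eq.mp (by simpa using hi) with hi | rfl
  · rw [List.getD_append _ _ _ _ hi]
    exact hs i hi k
  · simpa using hv k

lemma refutationBar_eq_zero [∀ i v k, Decidable (Q i v k)] {s : List ℕ} {i k : ℕ}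
    (hi : i < s.length) (hk : k < s.length) (hQ : Q i (s.getD i 0) k) : refutationBar Q s = 0 :=
  if_pos ⟨i, hi, k, hk, hQ⟩

lemma IsUnrefuted.refutationBar_ne_zero [∀ i v k, Decidable (Q i v k)] {s : List ℕ}
    (hs : IsUnrefuted Q s) : refutationBar Q s ≠ 0 := by
  intro hbar
  unfold refutationBar at hbar
  split_ifs at hbar with hrefuted
  obtain ⟨i, hi, k, -, hQ⟩ := hrefuted
  exact hs i hi k hQ

/-- `BI⁻` yields choice for `Π⁰₁` relations. -/
theorem BarInductionNeg.exists_forall_not [∀ i v k, Decidable (Q i v k)] (BI : BarInductionNeg)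
    (h : ∀ i, ∃ v, ∀ k, ¬ Q i v k) : ∃ γ : ℕ → ℕ, ∀ i k, ¬ Q i (γ i) k := by
  obtain ⟨γ, hγ⟩ := BI (refutationBar Q) (fun s => ¬ IsUnrefuted Q s)
    (fun s hbar hs => hs.refutationBar_ne_zero hbar)
    (fun s hext hs => by
      obtain ⟨v, hv⟩ := h s.length
      exact hext v (hs.append hv))
    (fun hnil => hnil (fun i hi => absurd hi (Nat.not_lt_zero i)))
  refine ⟨γ, fun i k hQ => hγ (max i k + 1) (refutationBar_eq_zero (i := i) (k := k) ?_ ?_ ?_)⟩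
  · simp
  · simp
  · rwa [seg_getD γ (by omega)]

end Choice

section Jump

variable (α : ℕ → ℕ) (T : ℕ → ℕ → Prop)

def JumpRefutes (i v k : ℕ) : Prop :=
  if i % 2 = 0 then v ≠ α (i / 2)
  else (v = 0 ∧ T (i / 2) k) ∨ (v = k + 1 ∧ ¬ T (i / 2) k)

instance [∀ n, DecidablePred (T n)] (i v k : ℕ) : Decidable (JumpRefutes α T i v k) := by
  unfold JumpRefutes
  infer_instance

variable {α T}

lemma jumpRefutes_even {n v k : ℕ} : JumpRefutes α T (2 * n) v k ↔ v ≠ α n := by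
  simp [JumpRefutes]

lemma jumpRefutes_odd {n v k : ℕ} :
    JumpRefutes α T (2 * n + 1) v k ↔ (v = 0 ∧ T n k) ∨ (v = k + 1 ∧ ¬ T n k) := by
  simp [JumpRefutes, Nat.add_mod, show (2 * n + 1) / 2 = n by omega]

lemma exists_forall_not_jumpRefutes (i : ℕ) : ∃ v, ∀ k, ¬ JumpRefutes α T i v k := by
  obtain ⟨n, rfl | rfl⟩ := i.even_or_odd'
  · exact ⟨α n, fun k => by simp [jumpRefutes_even]⟩
  by_cases hT : ∃ y, T n y
  · obtain ⟨y, hy⟩ := hT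
    refine ⟨y + 1, fun k => ?_⟩
    simp only [jumpRefutes_odd, Nat.add_right_cancel_iff, not_or, not_and, not_not]
    exact ⟨by omega, fun hk => hk ▸ hy⟩
  · refine ⟨0, fun k => ?_⟩
    simp only [jumpRefutes_odd, not_or, not_and]
    exact ⟨fun _ hk => hT ⟨k, hk⟩, by omega⟩

lemma eq_of_forall_not_jumpRefutes {β : ℕ → ℕ} (hβ : ∀ i k, ¬ JumpRefutes α T i (β i) k)
    (n : ℕ) : β (2 * n) = α n := by
  simpa [jumpRefutes_even] using hβ (2 * n) 0

lemma pos_iff_of_forall_not_jumpRefutes {β : ℕ → ℕ} (hβ : ∀ i k, ¬ JumpRefutes α T i (β i) k)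
    (n : ℕ) : β (2 * n + 1) > 0 ↔ ∃ y, T n y := by
  constructor
  · intro hpos
    refine ⟨β (2 * n + 1) - 1, by_contra fun hy => hβ (2 * n + 1) (β (2 * n + 1) - 1) ?_⟩
    exact jumpRefutes_odd.mpr (Or.inr ⟨by omega, hy⟩)
  · rintro ⟨y, hy⟩
    exact Nat.pos_of_ne_zero fun h0 => hβ (2 * n + 1) y (jumpRefutes_odd.mpr (Or.inl ⟨h0, hy⟩))

end Jump

/-- Closure under Turing jump from the contrapositive bar induction principle. -/
theorem jump_of_bar_induction
    (BI : ∀ (ρ : List ℕ → ℕ) (A : List ℕ → Prop),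
      (∀ s, ρ s = 0 → A s) → (∀ s, (∀ n : ℕ, A (s ++ [n])) → A s) → ¬ A [] →
      ∃ γ : ℕ → ℕ, ∀ n, ρ (seg γ n) ≠ 0)
    (α : ℕ → ℕ) (T : ℕ → ℕ → Prop) (hT : ∀ n, DecidablePred (T n)) :
    ∃ β : ℕ → ℕ, (∀ n, β (2*n) = α n) ∧ ∀ n, (β (2*n+1) > 0 ↔ ∃ y, T n y) := by
  obtain ⟨β, hβ⟩ := BarInductionNeg.exists_forall_not (Q := JumpRefutes α T) BI
    exists_forall_not_jumpRefutes
  exact ⟨β, eq_of_forall_not_jumpRefutes hβ, pos_iff_of_forall_not_jumpRefutes hβ⟩
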